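/- For an L-layer network whose activation φ is 1-Lipschitz and whose layer weight matrices satisfy ‖V_i‖_∞ ≤ M with M ≥ 1, if every neuronal approximation function satisfies sup_z |ℓ_{i,j}(z) − φ(z)| ≤ ε, then the output difference between the original network f and its LANN g satisfies ‖g(x) − f(x)‖_∞ ≤ ‖V_o‖_∞ · ε · Σ_{i=0}^{L-1} M^i for all x, i.e., the approximation error grows at most geometrically in depth. -/
import Mathlib


/-- Forward computation of a fully connected network with layer maps given by
continuous linear maps `V i`, biases `b i`, and neuron-wise activations `act i j`. -/
def forward (n : ℕ → ℕ) (V : ∀ i, (Fin (n i) → ℝ) →L[ℝ] (Fin (n (i + 1)) → ℝ))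
    (b : ∀ i, Fin (n (i + 1)) → ℝ) (act : ∀ i, Fin (n (i + 1)) → ℝ → ℝ) :
    (i : ℕ) → (Fin (n 0) → ℝ) → Fin (n i) → ℝ
  | 0, x => x
  | i + 1, x => fun j => act i j (V i (forward n V b act i x) j + b i j)

/-- For an `L`-layer network with 1-Lipschitz activation `φ` and layer weights of
operator norm at most `M ≥ 1` (sup norms), if every neuronal approximation function
satisfies `sup_z |ℓ i j z − φ z| ≤ ε`, then the output difference between the
original network `f` and its LANN `g` satisfies
`‖g x − f x‖_∞ ≤ ‖V_o‖ ⬝ ε ⬝ ∑_{i=0}^{L-1} M^i` for all `x`: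
the approximation error grows at most geometrically in depth. -/
theorem lann_depth_error_bound (L c : ℕ) (n : ℕ → ℕ)
    (V : ∀ i, (Fin (n i) → ℝ) →L[ℝ] (Fin (n (i + 1)) → ℝ))
    (b : ∀ i, Fin (n (i + 1)) → ℝ)
    (Vo : (Fin (n L) → ℝ) →L[ℝ] (Fin c → ℝ)) (bo : Fin c → ℝ)
    (φ : ℝ → ℝ) (ℓ : ∀ i, Fin (n (i + 1)) → ℝ → ℝ)
    (M ε : ℝ) (hM : 1 ≤ M)
    (hV : ∀ i, i < L → ‖V i‖ ≤ M)
    (hφ : LipschitzWith 1 φ)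
    (hℓ : ∀ i, i < L → ∀ (j : Fin (n (i + 1))) (z : ℝ), |ℓ i j z - φ z| ≤ ε)
    (hε : 0 ≤ ε) :
    ∀ x : Fin (n 0) → ℝ,
      ‖(Vo (forward n V b ℓ L x) + bo) - (Vo (forward n V b (fun _ _ => φ) L x) + bo)‖ ≤
        ‖Vo‖ * ε * ∑ i ∈ Finset.range L, M ^ i := by
  intro x
  have hsum : ∀ i : ℕ, (0:ℝ) ≤ ∑ k ∈ Finset.range i, M ^ k := by
    intro i
    exact Finset.sum_nonneg fun k _ => pow_nonneg (le_trans zero_le_one hM) k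
  have key : ∀ i, i ≤ L →
      ‖forward n V b ℓ i x - forward n V b (fun _ _ => φ) i x‖ ≤
        ε * ∑ k ∈ Finset.range i, M ^ k := by
    intro i
    induction i with
    | zero =>
      intro _
      simp [forward]
    | succ i ih =>
      intro hiL
      have hi : i < L := Nat.lt_of_succ_le hiL
      have ihb := ih (le_of_lt hi)
      have hbound : ∀ j : Fin (n (i + 1)),
          ‖(forward n V b ℓ (i + 1) x - forward n V b (fun _ _ => φ) (i + 1) x) j‖ ≤
            ε * ∑ k ∈ Finset.range (i + 1), M ^ k := by
        intro j
        set F := forward n V b ℓ i x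
        set G := forward n V b (fun _ _ => φ) i x
        have h1 : |ℓ i j (V i F j + b i j) - φ (V i F j + b i j)| ≤ ε := hℓ i hi j _
        have h2 : |φ (V i F j + b i j) - φ (V i G j + b i j)| ≤ |V i F j - V i G j| := by
          have := hφ.dist_le_mul (V i F j + b i j) (V i G j + b i j)
          simpa [Real.dist_eq, add_sub_add_right_eq_sub] using this
        have h3 : |V i F j - V i G j| ≤ M * (ε * ∑ k ∈ Finset.range i, M ^ k) := by
          have h4 : |V i F j - V i G j| = ‖(V i F - V i G) j‖ := by simp [Real.norm_eq_abs]
          have h5 : ‖(V i F - V i G) j‖ ≤ ‖V i F - V i G‖ := norm_le_pi_norm _ j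
          have h6 : ‖V i F - V i G‖ = ‖V i (F - G)‖ := by rw [map_sub]
          have h7 : ‖V i (F - G)‖ ≤ ‖V i‖ * ‖F - G‖ := (V i).le_opNorm _
          have h8 : ‖V i‖ * ‖F - G‖ ≤ M * (ε * ∑ k ∈ Finset.range i, M ^ k) :=
            mul_le_mul (hV i hi) ihb (norm_nonneg _) (le_trans zero_le_one hM)
          calc |V i F j - V i G j| = ‖(V i F - V i G) j‖ := h4
            _ ≤ ‖V i F - V i G‖ := h5
            _ = ‖V i (F - G)‖ := h6
            _ ≤ ‖V i‖ * ‖F - G‖ := h7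
            _ ≤ _ := h8
        have : ‖(forward n V b ℓ (i + 1) x - forward n V b (fun _ _ => φ) (i + 1) x) j‖ =
            |ℓ i j (V i F j + b i j) - φ (V i G j + b i j)| := by
          simp [forward, Real.norm_eq_abs, F, G]
        rw [this, geom_sum_succ]
        calc |ℓ i j (V i F j + b i j) - φ (V i G j + b i j)|
            ≤ |ℓ i j (V i F j + b i j) - φ (V i F j + b i j)| +
              |φ (V i F j + b i j) - φ (V i G j + b i j)| := abs_sub_le _ _ _
          _ ≤ ε + M * (ε * ∑ k ∈ Finset.range i, M ^ k) :=
              add_le_add h1 (le_trans h2 h3)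
          _ = ε * (M * ∑ k ∈ Finset.range i, M ^ k + 1) := by ring
      exact pi_norm_le_iff_of_nonneg (by positivity) |>.2 hbound
  have hmain := key L le_rfl
  have : (Vo (forward n V b ℓ L x) + bo) - (Vo (forward n V b (fun _ _ => φ) L x) + bo) =
      Vo (forward n V b ℓ L x - forward n V b (fun _ _ => φ) L x) := by
    rw [map_sub]; abel
  rw [this]
  calc ‖Vo (forward n V b ℓ L x - forward n V b (fun _ _ => φ) L x)‖
      ≤ ‖Vo‖ * ‖forward n V b ℓ L x - forward n V b (fun _ _ => φ) L x‖ := Vo.le_opNorm _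
    _ ≤ ‖Vo‖ * (ε * ∑ i ∈ Finset.range L, M ^ i) :=
        mul_le_mul_of_nonneg_left hmain (norm_nonneg _)
    _ = ‖Vo‖ * ε * ∑ i ∈ Finset.range L, M ^ i := by ring
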